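/- arXiv:2404.05942 — 2 statements merged into one kernel-verified Lean document; each statement's English description precedes it below -/
import Mathlib

section
/- Let k ≥ 3, l ≥ 2 and s ≥ 0 be integers, and let R be a K_3-free graph on n−s vertices with maximum degree at most l−1. Then the join T_{k-2}(s) ∨ R is both K_{k+1}-free and (s+1)S_l-free. -/
open SimpleGraph

/-- `G` contains a copy of `H` (an injective graph homomorphism). -/
def Contains {α β : Type*} (G : SimpleGraph β) (H : SimpleGraph α) : Prop :=
  ∃ f : α ↪ β, ∀ a b, H.Adj a b → G.Adj (f a) (f b)

/-- `G` is `H`-free. -/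
def Free {α β : Type*} (G : SimpleGraph β) (H : SimpleGraph α) : Prop := ¬ Contains G H

/-- The Turán-type extremal number for a property `P` of graphs on `Fin n`. -/
noncomputable def exNum (n : ℕ) (P : SimpleGraph (Fin n) → Prop) : ℕ :=
  sSup {m | ∃ G : SimpleGraph (Fin n), P G ∧ G.edgeSet.ncard = m}

/-- The star forest consisting of `c` disjoint copies of the star `S_l`. -/
def starForest (c l : ℕ) : SimpleGraph (Fin c × (Unit ⊕ Fin l)) :=
  SimpleGraph.fromRel (fun x y => x.1 = y.1 ∧ x.2.isLeft ≠ y.2.isLeft)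

/-- The join of two graphs. -/
def join {α β : Type*} (G : SimpleGraph α) (H : SimpleGraph β) : SimpleGraph (α ⊕ β) :=
  SimpleGraph.fromRel (fun x y => match x, y with
    | Sum.inl a, Sum.inl b => G.Adj a b
    | Sum.inr a, Sum.inr b => H.Adj a b
    | _, _ => True)

/-
A clique of a join splits into a clique of each side, so clique-freeness thresholds add:
`T_{k-2}(s)` has no `K_{k-1}` and `R` no `K_3`, hence the join has no `K_{k+1}`.
Since `R` has maximum degree below `l`, every copy of `S_l` in the join meets `T_{k-2}(s)`;
disjoint copies meet it in distinct vertices, and there are only `s` of them.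
-/

namespace SimpleGraph

variable {α β : Type*}

lemma contains_iff_isContained {G : SimpleGraph β} {H : SimpleGraph α} :
    Contains G H ↔ H ⊑ G := by
  rw [isContained_iff_exists_le_comap]
  rfl

lemma free_iff_free {G : SimpleGraph β} {H : SimpleGraph α} : _root_.Free G H ↔ H.Free G :=
  contains_iff_isContained.not

lemma free_completeGraph_iff_cliqueFree {G : SimpleGraph β} {n : ℕ} :
    _root_.Free G (completeGraph (Fin n)) ↔ G.CliqueFree n := by
  rw [free_iff_free, ← cliqueFree_iff_top_free, Fintype.card_fin]

lemma CliqueFree.card_lt_of_isClique {G : SimpleGraph α} {n : ℕ} {t : Finset α}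
    (hG : G.CliqueFree n) (ht : G.IsClique (t : Set α)) : t.card < n := by
  by_contra! h
  obtain ⟨u, hut, hu⟩ := Finset.exists_subset_card_eq h
  exact hG u ⟨ht.subset (by simpa using hut), hu⟩

lemma le_ncard_neighborSet_of_injective [Finite α] {G : SimpleGraph α} {v : α} {l : ℕ}
    {w : Fin l → α} (hw : Function.Injective w) (hadj : ∀ j, G.Adj v (w j)) :
    l ≤ (G.neighborSet v).ncard := by
  calc l = (Set.range w).ncard := by rw [Set.ncard_range_of_injective hw, Nat.card_fin]
    _ ≤ _ := Set.ncard_le_ncard (Set.range_subset_iff.mpr hadj)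

lemma starForest_adj_center_leaf {c l : ℕ} (i : Fin c) (j : Fin l) :
    (starForest c l).Adj (i, .inl ()) (i, .inr j) :=
  ⟨by simp, .inl ⟨rfl, by simp⟩⟩

section Join

variable {G : SimpleGraph α} {H : SimpleGraph β}

@[simp]
lemma join_adj_inl_inl {a b : α} : (join G H).Adj (.inl a) (.inl b) ↔ G.Adj a b := by
  simpa [join, G.adj_comm] using G.ne_of_adj

@[simp]
lemma join_adj_inr_inr {a b : β} : (join G H).Adj (.inr a) (.inr b) ↔ H.Adj a b := by
  simpa [join, H.adj_comm] using H.ne_of_adj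

lemma IsClique.toLeft_of_join {t : Finset (α ⊕ β)} (ht : (join G H).IsClique (t : Set (α ⊕ β))) :
    G.IsClique (t.toLeft : Set α) := fun _ ha _ hb hab =>
  join_adj_inl_inl.mp (ht (by simpa using ha) (by simpa using hb) (by simpa using hab))

lemma IsClique.toRight_of_join {t : Finset (α ⊕ β)} (ht : (join G H).IsClique (t : Set (α ⊕ β))) :
    H.IsClique (t.toRight : Set β) := fun _ ha _ hb hab =>
  join_adj_inr_inr.mp (ht (by simpa using ha) (by simpa using hb) (by simpa using hab))

theorem CliqueFree.join {a b : ℕ} (hG : G.CliqueFree (a + 1)) (hH : H.CliqueFree (b + 1)) :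
    (_root_.join G H).CliqueFree (a + b + 1) := by
  intro t ht
  have hleft := hG.card_lt_of_isClique ht.isClique.toLeft_of_join
  have hright := hH.card_lt_of_isClique ht.isClique.toRight_of_join
  have hsplit := t.card_toLeft_add_card_toRight
  have hcard := ht.card_eq
  omega

variable {c l : ℕ}

lemma Copy.exists_inl_of_starForest_join [Finite β] (hH : ∀ v, (H.neighborSet v).ncard < l)
    (f : Copy (starForest c l) (join G H)) (i : Fin c) : ∃ x a, f (i, x) = .inl a := by
  by_contra! hright
  have hinr : ∀ x, ∃ b, f (i, x) = .inr b := fun x => by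
    cases hfx : f (i, x) with
    | inl a => exact absurd hfx (hright x a)
    | inr b => exact ⟨b, rfl⟩
  choose w hw using hinr
  have hinj : Function.Injective fun j : Fin l => w (.inr j) := fun j₁ j₂ h => by
    simpa using f.injective ((hw _).trans ((congrArg Sum.inr h).trans (hw _).symm))
  have hadj (j : Fin l) : H.Adj (w (.inl ())) (w (.inr j)) := by
    simpa [hw] using f.toHom.map_adj (starForest_adj_center_leaf i j)
  exact (le_ncard_neighborSet_of_injective hinj hadj).not_gt (hH _)

lemma free_starForest_join [Finite α] [Finite β] (hc : Nat.card α < c)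
    (hH : ∀ v, (H.neighborSet v).ncard < l) : (starForest c l).Free (join G H) := by
  rintro ⟨f⟩
  choose x a hxa using f.exists_inl_of_starForest_join hH
  have ha : Function.Injective a := fun i j hij => by
    simpa using congrArg Prod.fst (f.injective ((hxa i).trans ((congrArg _ hij).trans (hxa j).symm)))
  simpa using (Nat.card_le_card_of_injective a ha).trans_lt hc

end Join

end SimpleGraph

theorem stmt9 (n k l s : ℕ) (hk : 3 ≤ k) (hl : 2 ≤ l)
    (R : SimpleGraph (Fin (n - s)))
    (hR3 : _root_.Free R (completeGraph (Fin 3)))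
    (hRdeg : ∀ v, (R.neighborSet v).ncard ≤ l - 1) :
    _root_.Free (join (turanGraph s (k - 2)) R) (completeGraph (Fin (k + 1))) ∧
    _root_.Free (join (turanGraph s (k - 2)) R) (starForest (s + 1) l) := by
  have hTuran : (turanGraph s (k - 2)).CliqueFree (k - 2 + 1) := turanGraph_cliqueFree (by omega)
  have hRtriangle : R.CliqueFree (2 + 1) := free_completeGraph_iff_cliqueFree.mp hR3
  have hRdeg' (v : Fin (n - s)) : (R.neighborSet v).ncard < l := by have := hRdeg v; omega
  constructor
  · rw [free_completeGraph_iff_cliqueFree, show k + 1 = k - 2 + 2 + 1 by omega]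
    exact hTuran.join hRtriangle
  · exact free_iff_free.mpr (free_starForest_join (by simp) hRdeg')
end

section
/- Let k ≥ 3, l ≥ 2 and s ≥ 1 be integers and let n ≥ k·s² + (s+1)·(l+1)². If G is a {K_{k+1}, (s+1)S_l}-free graph on n vertices with e(G) = ex(n, {K_{k+1}, (s+1)S_l}), then there exists a set U ⊆ V(G) with |U| = s such that the induced subgraph G[V(G) \ U] is S_l-free. -/
/-!
Let `U` be the set of vertices of degree at least `(s+1)(l+1)`. Such a vertex has `l` neighbours
outside any `s(l+1)` given vertices, so the vertices of `U` can be added one by one as centres to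
any packing of disjoint stars `S_l` avoiding `U`; as `G` is `(s+1)S_l`-free, such a packing has at
most `s - |U|` stars. In a packing of maximum size, no vertex outside `U` and the packing has `l`
neighbours outside them. If `|U| = s` the packing is empty, so `G - U` is `S_l`-free. If `|U| < s`,
summing degrees over `U`, over the packing (degrees below `(s+1)(l+1)`) and over the remaining
vertices gives `2e(G) ≲ (2|U| + l - 1)n`, whereas joining an independent `s`-set to disjoint copies
of `K_{l-1,l-1}` gives a `{K_{k+1}, (s+1)S_l}`-free graph with `2e ≳ (2s + l - 1)n`; for
`n ≥ ks² + (s+1)(l+1)²` the lower-order terms cannot close this gap, contradicting extremality.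
-/
open SimpleGraph

open Finset Function

section StarPacking

variable {V : Type*} [DecidableEq V] {G : SimpleGraph V} {l : ℕ}

def starVerts (p : V × Finset V) : Finset V := insert p.1 p.2

structure IsStarPacking (G : SimpleGraph V) (l : ℕ) (P : Finset (V × Finset V)) : Prop where
  card_leaves : ∀ p ∈ P, #p.2 = l
  adj : ∀ p ∈ P, ∀ w ∈ p.2, G.Adj p.1 w
  pairwiseDisjoint : (P : Set (V × Finset V)).PairwiseDisjoint starVerts

def packingVerts (P : Finset (V × Finset V)) : Finset V := P.biUnion starVerts

namespace IsStarPacking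

variable {P Q : Finset (V × Finset V)}

lemma empty : IsStarPacking G l ∅ := ⟨by simp, by simp, by simp⟩

lemma subset (hP : IsStarPacking G l P) (hQ : Q ⊆ P) : IsStarPacking G l Q :=
  ⟨fun p hp => hP.card_leaves p (hQ hp), fun p hp => hP.adj p (hQ hp),
    hP.pairwiseDisjoint.subset (by simpa using hQ)⟩

lemma card_starVerts (hP : IsStarPacking G l P) {p : V × Finset V} (hp : p ∈ P) :
    #(starVerts p) = l + 1 := by
  rw [starVerts, card_insert_of_notMem fun h => (hP.adj p hp _ h).ne rfl, hP.card_leaves p hp]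

lemma card_packingVerts (hP : IsStarPacking G l P) :
    #(packingVerts P) = #P * (l + 1) := by
  rw [packingVerts, card_biUnion hP.pairwiseDisjoint,
    sum_congr rfl fun p hp => hP.card_starVerts hp, sum_const, smul_eq_mul]

lemma insert (hP : IsStarPacking G l P) {v : V} {T : Finset V} (hT : #T = l)
    (hadj : ∀ w ∈ T, G.Adj v w) (hdisj : Disjoint (starVerts (v, T)) (packingVerts P)) :
    IsStarPacking G l (insert (v, T) P) := by
  refine ⟨?_, ?_, ?_⟩
  · simpa [hT] using hP.card_leaves
  · intro p hp
    rcases mem_insert.1 hp with rfl | hp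
    exacts [hadj, hP.adj p hp]
  · rw [coe_insert]
    exact hP.pairwiseDisjoint.insert fun p hp _ =>
      hdisj.mono_right (subset_biUnion_of_mem starVerts hp)

lemma contains (hP : IsStarPacking G l P) : Contains G (starForest #P l) := by
  let star (i : Fin #P) : P := P.equivFin.symm i
  let leaf (i : Fin #P) : Fin l ≃ (star i).1.2 :=
    ((star i).1.2.equivFinOfCardEq (hP.card_leaves _ (star i).2)).symm
  let f (x : Fin #P × (Unit ⊕ Fin l)) : V :=
    Sum.elim (fun _ => (star x.1).1.1) (fun a => leaf x.1 a) x.2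
  have hf_mem (x) : f x ∈ starVerts (star x.1).1 := by
    rcases x with ⟨i, _ | a⟩
    exacts [mem_insert_self _ _, mem_insert_of_mem (leaf i a).2]
  have hf_adj (i : Fin #P) (a : Fin l) : G.Adj (f (i, .inl ())) (f (i, .inr a)) :=
    hP.adj _ (star i).2 _ (leaf i a).2
  have hf_inj : Injective f := by
    rintro ⟨i, x⟩ ⟨j, y⟩ hxy
    obtain rfl : i = j := by
      by_contra hij
      refine disjoint_left.1 (hP.pairwiseDisjoint (star i).2 (star j).2 ?_) (hf_mem (i, x)) ?_
      · simpa [star, Subtype.ext_iff] using hij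
      · exact hxy ▸ hf_mem (j, y)
    rcases x with _ | a <;> rcases y with _ | b
    · rfl
    · exact absurd hxy (hf_adj i b).ne
    · exact absurd hxy.symm (hf_adj i a).ne
    · simpa [f] using (leaf i).injective (Subtype.ext hxy)
  refine ⟨⟨f, hf_inj⟩, ?_⟩
  rintro ⟨i, x⟩ ⟨j, y⟩ ⟨-, (⟨rfl, hxy⟩ | ⟨rfl, hxy⟩)⟩ <;>
    rcases x with _ | a <;> rcases y with _ | b <;> simp at hxy <;>
    first | exact hf_adj _ _ | exact (hf_adj _ _).symm

end IsStarPacking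

variable {P : Finset (V × Finset V)} {s : ℕ}

lemma packingVerts_insert (p : V × Finset V) (P : Finset (V × Finset V)) :
    packingVerts (insert p P) = starVerts p ∪ packingVerts P :=
  biUnion_insert

lemma card_insert_of_disjoint_packingVerts {v : V} {T : Finset V}
    (h : Disjoint (starVerts (v, T)) (packingVerts P)) : #(insert (v, T) P) = #P + 1 :=
  card_insert_of_notMem fun hP =>
    disjoint_left.1 h (mem_insert_self v T) (mem_biUnion.2 ⟨_, hP, mem_insert_self v T⟩)

variable [Fintype V] [DecidableRel G.Adj]

lemma exists_starPacking_card_eq_add_of_le_degree (hP : IsStarPacking G l P) {X : Finset V}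
    (hX : Disjoint X (packingVerts P))
    (hdeg : ∀ v ∈ X, (#P + #X) * (l + 1) ≤ G.degree v) :
    ∃ Q, IsStarPacking G l Q ∧ #Q = #P + #X := by
  induction X using Finset.induction_on generalizing P with
  | empty => exact ⟨P, hP, rfl⟩
  | insert u X hu ih =>
    rw [card_insert_of_notMem hu] at hdeg
    rw [disjoint_insert_left] at hX
    set F := packingVerts P ∪ X
    have hF : #F + l ≤ G.degree u := by
      have := card_union_le (packingVerts P) X
      have := hdeg u (mem_insert_self u X)
      rw [hP.card_packingVerts] at *
      nlinarith
    obtain ⟨T, hTN, hT⟩ : ∃ T ⊆ G.neighborFinset u \ F, #T = l := by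
      refine exists_subset_card_eq ?_
      have := le_card_sdiff F (G.neighborFinset u)
      rw [card_neighborFinset_eq_degree] at this
      omega
    have hTadj : ∀ w ∈ T, G.Adj u w := fun w hw =>
      (mem_neighborFinset _ _ _).1 (mem_sdiff.1 (hTN hw)).1
    have hTF : Disjoint T F := disjoint_of_subset_left hTN sdiff_disjoint
    have hdisj : Disjoint (starVerts (u, T)) (packingVerts P) := by
      refine disjoint_insert_left.2 ⟨hX.1, ?_⟩
      exact hTF.mono_right subset_union_left
    have hcard := card_insert_of_disjoint_packingVerts hdisj
    obtain ⟨Q, hQ, hQcard⟩ := ih (hP.insert hT hTadj hdisj) (by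
        rw [packingVerts_insert, disjoint_union_right]
        exact ⟨disjoint_insert_right.2 ⟨hu, (hTF.mono_right subset_union_right).symm⟩,
          hX.2⟩)
      (fun v hv => by rw [hcard, add_right_comm]; exact hdeg v (mem_insert_of_mem hv))
    exact ⟨Q, hQ, by rw [hQcard, hcard, card_insert_of_notMem hu, add_right_comm, add_assoc]⟩

lemma card_add_card_le_of_free (hfree : _root_.Free G (starForest (s + 1) l))
    (hP : IsStarPacking G l P) {X : Finset V} (hX : Disjoint X (packingVerts P))
    (hdeg : ∀ v ∈ X, (s + 1) * (l + 1) ≤ G.degree v) : #P + #X ≤ s := by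
  by_contra! h
  obtain ⟨P', hP', X', hX', hcard⟩ : ∃ P' ⊆ P, ∃ X' ⊆ X, #P' + #X' = s + 1 := by
    rcases le_total (s + 1) #X with hs | hs
    · obtain ⟨X', hX', hc⟩ := exists_subset_card_eq hs
      exact ⟨∅, empty_subset P, X', hX', by simp [hc]⟩
    · obtain ⟨P', hP', hc⟩ := exists_subset_card_eq (show s + 1 - #X ≤ #P by omega)
      exact ⟨P', hP', X, subset_rfl, by omega⟩
  obtain ⟨Q, hQ, hQcard⟩ := exists_starPacking_card_eq_add_of_le_degree (hP.subset hP')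
    (disjoint_of_subset_left hX' (hX.mono_right (biUnion_subset_biUnion_of_subset_left _ hP')))
    (fun v hv => hcard ▸ hdeg v (hX' hv))
  exact hfree (hQcard.trans hcard ▸ hQ.contains)

end StarPacking

section MaxDegreeOutside

variable {V : Type*} [Fintype V] [DecidableEq V] {G : SimpleGraph V} [DecidableRel G.Adj]
  {I : Finset V} {l : ℕ}

lemma exists_mem_of_forall_card_neighborFinset_sdiff_lt
    (h : ∀ v ∉ I, #(G.neighborFinset v \ I) < l) {v : V} (hv : v ∉ I) {e : Fin l → V}
    (he : Injective e) (hadj : ∀ a, G.Adj v (e a)) : ∃ a, e a ∈ I := by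
  by_contra! heI
  have hsub : univ.image e ⊆ G.neighborFinset v \ I := by
    simpa [subset_iff] using fun a => ⟨hadj a, heI a⟩
  have := card_le_card hsub
  rw [card_image_of_injective _ he, card_univ, Fintype.card_fin] at this
  exact (h v hv).not_ge this

lemma free_induce_compl_of_forall_card_neighborFinset_sdiff_lt
    (h : ∀ v ∉ I, #(G.neighborFinset v \ I) < l) :
    _root_.Free (G.induce (↑Iᶜ : Set V)) (completeBipartiteGraph Unit (Fin l)) := by
  rintro ⟨f, hf⟩
  have hout (x) : (f x : V) ∉ I := by simpa using (f x).2
  obtain ⟨a, ha⟩ := exists_mem_of_forall_card_neighborFinset_sdiff_lt h (hout (.inl ()))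
    (e := fun a => f (.inr a)) (fun a b hab => by simpa using f.injective (Subtype.ext hab))
    (fun a => hf _ _ (by simp))
  exact hout _ ha

lemma free_starForest_of_forall_card_neighborFinset_sdiff_lt {c : ℕ} (hI : #I ≤ c)
    (h : ∀ v ∉ I, #(G.neighborFinset v \ I) < l) : _root_.Free G (starForest (c + 1) l) := by
  rintro ⟨f, hf⟩
  have hmeet (i : Fin (c + 1)) : ∃ x, f (i, x) ∈ I := by
    by_cases hc : f (i, .inl ()) ∈ I
    · exact ⟨_, hc⟩
    obtain ⟨a, ha⟩ := exists_mem_of_forall_card_neighborFinset_sdiff_lt h hc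
      (e := fun a => f (i, .inr a)) (fun a b hab => by simpa using f.injective hab)
      (fun a => hf _ _ (by simp [starForest]))
    exact ⟨_, ha⟩
  choose x hx using hmeet
  have := card_le_card_of_injOn (s := univ) (t := I) (fun i => f (i, x i)) (fun i _ => hx i)
    (fun i _ j _ hij => (Prod.ext_iff.1 (f.injective hij)).1)
  simp only [card_univ, Fintype.card_fin] at this
  omega

end MaxDegreeOutside

section DegreeSum

variable {V : Type*} [Fintype V] {G : SimpleGraph V} [DecidableRel G.Adj]

lemma sum_card_filter_adj_le_sum_degree (A B : Finset V) :
    ∑ v ∈ A, #{w ∈ B | G.Adj v w} ≤ ∑ w ∈ B, G.degree w := by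
  refine (sum_card_bipartiteAbove_eq_sum_card_bipartiteBelow G.Adj).trans_le
    (sum_le_sum fun w _ => ?_)
  rw [← card_neighborFinset_eq_degree]
  exact card_le_card fun v hv => by simpa [bipartiteBelow, adj_comm] using (mem_filter.1 hv).2

lemma sum_degree_add_le [DecidableEq V] {U Z : Finset V} (hUZ : Disjoint U Z) {D c : ℕ}
    (hZ : ∀ v ∈ Z, G.degree v < D)
    (hR : ∀ v ∉ U ∪ Z, #(G.neighborFinset v \ (U ∪ Z)) < c) :
    ∑ v, G.degree v + Fintype.card V + #Z
      ≤ #U * Fintype.card V + 2 * (#Z * D) + #(U ∪ Z)ᶜ * (#U + c) := by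
  have hU : ∑ v ∈ U, (G.degree v + 1) ≤ #U * Fintype.card V := by
    rw [← smul_eq_mul]
    exact sum_le_card_nsmul U _ _ fun v _ => G.degree_lt_card_verts v
  have hZ : ∑ v ∈ Z, (G.degree v + 1) ≤ #Z * D := by
    rw [← smul_eq_mul]
    exact sum_le_card_nsmul Z _ _ hZ
  have hR : ∑ v ∈ (U ∪ Z)ᶜ, (G.degree v + 1)
      ≤ ∑ v ∈ (U ∪ Z)ᶜ, (#U + c + #{w ∈ Z | G.Adj v w}) := by
    refine sum_le_sum fun v hv => ?_
    have hsub :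
        G.neighborFinset v ⊆ U ∪ {w ∈ Z | G.Adj v w} ∪ G.neighborFinset v \ (U ∪ Z) := by
      intro w hw
      by_cases hwU : w ∈ U <;> by_cases hwZ : w ∈ Z <;> simp_all
    have := card_le_card hsub
    have := card_union_le (U ∪ {w ∈ Z | G.Adj v w}) (G.neighborFinset v \ (U ∪ Z))
    have := card_union_le U {w ∈ Z | G.Adj v w}
    have := hR v (mem_compl.1 hv)
    rw [card_neighborFinset_eq_degree] at *
    omega
  have hcross := sum_card_filter_adj_le_sum_degree (G := G) (U ∪ Z)ᶜ Z
  have hsplit : ∑ v, G.degree v + Fintype.card V = ∑ v ∈ U, (G.degree v + 1)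
      + ∑ v ∈ Z, (G.degree v + 1) + ∑ v ∈ (U ∪ Z)ᶜ, (G.degree v + 1) := by
    rw [← sum_union hUZ, sum_add_sum_compl, sum_add_distrib, sum_const, card_univ, smul_eq_mul,
      mul_one]
  simp only [sum_add_distrib, sum_const, smul_eq_mul, mul_one, mul_add] at hU hZ hR hsplit ⊢
  omega

end DegreeSum

lemma free_completeGraph_of_cliqueFree {V : Type*} {G : SimpleGraph V} {r : ℕ}
    (h : G.CliqueFree r) : _root_.Free G (completeGraph (Fin r)) :=
  fun ⟨f, hf⟩ => (cliqueFree_iff.1 h).false ⟨⟨f, hf _ _⟩, f.injective⟩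

section FinFilter

variable {n d : ℕ}

lemma card_filter_div_eq_le (hd : 0 < d) (b : ℕ) : #{x : Fin n | x.val / d = b} ≤ d := by
  refine (card_le_card_of_injOn (t := range d) (fun x => x.val % d)
    (fun x _ => mem_range.2 (Nat.mod_lt _ hd)) fun x hx y hy hxy => Fin.ext ?_).trans_eq
    (card_range d)
  simp only [coe_filter, mem_univ, true_and, Set.mem_ofPred_eq] at hx hy
  rw [← Nat.div_add_mod x.val d, ← Nat.div_add_mod y.val d, hx, hy]
  exact congrArg _ hxy

lemma le_card_filter_div_eq {b : ℕ} (h : (b + 1) * d ≤ n) :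
    d ≤ #{x : Fin n | x.val / d = b} := by
  have hsub : Ico (b * d) ((b + 1) * d) ⊆
      ({x : Fin n | x.val / d = b} : Finset _).map Fin.valEmbedding := by
    intro x hx
    rw [mem_Ico] at hx
    exact mem_map.2 ⟨⟨x, by omega⟩, by simpa using Nat.div_eq_of_lt_le hx.1 hx.2, rfl⟩
  simpa [add_mul] using card_le_card hsub

lemma card_filter_le_val {m : ℕ} (hm : m ≤ n) : #({x | m ≤ x.val} : Finset (Fin n)) = n - m := by
  have := card_filter_add_card_filter_not (s := univ) fun x : Fin n => x.val < m
  simp only [Fin.card_filter_val_lt, not_lt, card_univ, Fintype.card_fin] at this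
  omega

end FinFilter

section ExtremalGraph

/-- The independent set `{x | m ≤ x}` joined to `{x | x < m}`, on which the blocks
`{x | x / d = 2 b}` and `{x | x / d = 2 b + 1}` span copies of `K_{d,d}`. -/
def extremalGraph (n m d : ℕ) : SimpleGraph (Fin n) where
  Adj x y := (m ≤ x.val ∧ y.val < m) ∨ (x.val < m ∧ m ≤ y.val) ∨
    (x.val < m ∧ y.val < m ∧ x.val / d ≠ y.val / d ∧ x.val / d / 2 = y.val / d / 2)
  symm := ⟨fun _ _ h => by omega⟩
  loopless := ⟨fun _ h => by omega⟩

instance (n m d : ℕ) : DecidableRel (extremalGraph n m d).Adj :=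
  fun _ _ => by unfold extremalGraph; infer_instance

variable {n m d : ℕ}

@[simp] lemma extremalGraph_adj {x y : Fin n} : (extremalGraph n m d).Adj x y ↔
    (m ≤ x.val ∧ y.val < m) ∨ (x.val < m ∧ m ≤ y.val) ∨
      (x.val < m ∧ y.val < m ∧ x.val / d ≠ y.val / d ∧ x.val / d / 2 = y.val / d / 2) :=
  Iff.rfl

lemma extremalGraph_colorable : (extremalGraph n m d).Colorable 3 :=
  ⟨⟨fun x => if m ≤ x.val then 2 else if x.val / d % 2 = 0 then 0 else 1, fun {x y} h => by
    rw [extremalGraph_adj] at h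
    split_ifs <;> simp <;> omega⟩⟩

lemma free_completeGraph_extremalGraph {k : ℕ} (hk : 3 ≤ k) :
    _root_.Free (extremalGraph n m d) (completeGraph (Fin (k + 1))) :=
  free_completeGraph_of_cliqueFree (extremalGraph_colorable.cliqueFree (by omega))

lemma card_neighborFinset_extremalGraph_sdiff_lt (hd : 0 < d) {v : Fin n} (hv : v.val < m) :
    #((extremalGraph n m d).neighborFinset v \ ({x | m ≤ x.val} : Finset (Fin n))) < d + 1 := by
  set N := (extremalGraph n m d).neighborFinset v \ ({x | m ≤ x.val} : Finset (Fin n))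
  rcases N.eq_empty_or_nonempty with h | ⟨w, hw⟩
  · simp [h]
  have hsub : N ⊆ ({x | x.val / d = w.val / d} : Finset (Fin n)) := by
    intro x hx
    simp only [N, mem_sdiff, mem_neighborFinset, extremalGraph_adj, mem_filter, mem_univ,
      true_and] at hx hw ⊢
    omega
  exact Nat.lt_succ_of_le ((card_le_card hsub).trans (card_filter_div_eq_le hd _))

lemma free_starForest_extremalGraph (hd : 0 < d) (hm : m ≤ n) :
    _root_.Free (extremalGraph n m d) (starForest (n - m + 1) (d + 1)) :=
  free_starForest_of_forall_card_neighborFinset_sdiff_lt (card_filter_le_val hm).le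
    fun v hv => card_neighborFinset_extremalGraph_sdiff_lt hd (by simpa using hv)

end ExtremalGraph

section ExtremalGraphDegrees

variable {n m d : ℕ}

lemma le_degree_extremalGraph {v : Fin n} (hv : m ≤ v.val) (hm : m ≤ n) :
    m ≤ (extremalGraph n m d).degree v := by
  rw [← card_neighborFinset_eq_degree]
  refine (min_eq_right hm).symm.trans_le (Fin.card_filter_val_lt.symm.trans_le (card_le_card ?_))
  intro x hx
  simp only [mem_filter, mem_univ, true_and, mem_neighborFinset, extremalGraph_adj] at hx ⊢
  omega

lemma sub_le_degree_extremalGraph {v : Fin n} (hv : v.val < m) (hm : m ≤ n) :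
    n - m ≤ (extremalGraph n m d).degree v := by
  rw [← card_neighborFinset_eq_degree, ← card_filter_le_val hm]
  refine card_le_card fun x hx => ?_
  simp only [mem_filter, mem_univ, true_and, mem_neighborFinset, extremalGraph_adj] at hx ⊢
  omega

lemma sub_add_le_degree_extremalGraph (hd : 0 < d) (hm : m ≤ n) {v : Fin n} (hv : v.val < m)
    {p : ℕ} (hp : p / 2 = v.val / d / 2) (hpv : p ≠ v.val / d) (hpm : (p + 1) * d ≤ m) :
    n - m + d ≤ (extremalGraph n m d).degree v := by
  have hblock {x : Fin n} (hx : x.val / d = p) : x.val < m :=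
    ((Nat.div_lt_iff_lt_mul hd).1 (hx.trans_lt p.lt_succ_self)).trans_le hpm
  set I : Finset (Fin n) := {x | m ≤ x.val}
  set B : Finset (Fin n) := {x | x.val / d = p}
  have hdisj : Disjoint I B := disjoint_filter.2 fun x _ hx hxp => (hblock hxp).not_ge hx
  have hsub : I ∪ B ⊆ (extremalGraph n m d).neighborFinset v := by
    intro x hx
    have := hblock (x := x)
    simp only [I, B, mem_union, mem_filter, mem_univ, true_and, mem_neighborFinset,
      extremalGraph_adj] at hx this ⊢
    omega
  have := card_le_card hsub
  rw [card_union_of_disjoint hdisj, card_filter_le_val hm, card_neighborFinset_eq_degree] at this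
  have : d ≤ #B := le_card_filter_div_eq (hpm.trans hm)
  omega

/-- The vertices below `m` whose partner block `v / d + 1` is cut off by `m`: they all lie in
a single block. -/
lemma card_exceptional_le (hd : 0 < d) :
    #{v : Fin n | v.val < m ∧ v.val / d % 2 = 0 ∧ m < (v.val / d + 2) * d} ≤ d := by
  rcases eq_empty_or_nonempty
    ({v | v.val < m ∧ v.val / d % 2 = 0 ∧ m < (v.val / d + 2) * d} : Finset (Fin n))
    with h | ⟨w, hw⟩
  · simp [h]
  refine (card_le_card fun x hx => ?_).trans (card_filter_div_eq_le hd (w.val / d))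
  simp only [mem_filter, mem_univ, true_and] at hx hw ⊢
  have hx' := Nat.div_mul_le_self x.val d
  have hw' := Nat.div_mul_le_self w.val d
  rcases lt_trichotomy (x.val / d) (w.val / d) with h | h | h
  · have := Nat.mul_le_mul_right d (show x.val / d + 2 ≤ w.val / d by omega)
    omega
  · exact h
  · have := Nat.mul_le_mul_right d (show w.val / d + 2 ≤ x.val / d by omega)
    omega

lemma two_mul_sub_mul_add_le_sum_degree_extremalGraph (hd : 0 < d) (hm : m ≤ n) :
    2 * (n - m) * m + d * (m - d) ≤ ∑ v, (extremalGraph n m d).degree v := by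
  set W : Finset (Fin n) := {x | x.val < m}
  set E : Finset (Fin n) := {v | v.val < m ∧ v.val / d % 2 = 0 ∧ m < (v.val / d + 2) * d}
  have hEW : E ⊆ W := fun v hv => by
    simp only [E, W, mem_filter, mem_univ, true_and] at hv ⊢
    exact hv.1
  have hW : #W = m := Fin.card_filter_val_lt.trans (min_eq_right hm)
  have hWc : #Wᶜ = n - m := by rw [card_compl, hW, Fintype.card_fin]
  have hE : #E ≤ d := card_exceptional_le hd
  have hWE : #(W \ E) + #E = m := by
    rw [card_sdiff_of_subset hEW, hW, Nat.sub_add_cancel (hW ▸ card_le_card hEW)]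
  have hI : #Wᶜ * m ≤ ∑ v ∈ Wᶜ, (extremalGraph n m d).degree v := by
    rw [← smul_eq_mul]
    exact card_nsmul_le_sum _ _ _ fun v hv =>
      le_degree_extremalGraph (by simpa [W] using hv) hm
  have hE' : #E * (n - m) ≤ ∑ v ∈ E, (extremalGraph n m d).degree v := by
    rw [← smul_eq_mul]
    exact card_nsmul_le_sum _ _ _ fun v hv =>
      sub_le_degree_extremalGraph (by simpa [W] using hEW hv) hm
  have hWE' : #(W \ E) * (n - m + d) ≤ ∑ v ∈ W \ E, (extremalGraph n m d).degree v := by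
    rw [← smul_eq_mul]
    refine card_nsmul_le_sum _ _ _ fun v hv => ?_
    simp only [mem_sdiff, W, E, mem_filter, mem_univ, true_and, not_and, not_lt] at hv
    obtain ⟨hvm, hvE⟩ := hv
    rcases Nat.mod_two_eq_zero_or_one (v.val / d) with hev | hodd
    · exact sub_add_le_degree_extremalGraph hd hm hvm (p := v.val / d + 1) (by omega) (by omega)
        (hvE hvm hev)
    · have hvd := (Nat.div_mul_le_self v.val d).trans hvm.le
      obtain ⟨b, hb⟩ : ∃ b, v.val / d = b := ⟨_, rfl⟩
      rw [hb] at hodd hvd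
      refine sub_add_le_degree_extremalGraph hd hm hvm (p := b - 1) (by rw [hb]; omega)
        (by rw [hb]; omega) ?_
      rwa [Nat.sub_add_cancel (by omega)]
  have hsplit : #E * (n - m) + #(W \ E) * (n - m + d) = m * (n - m) + #(W \ E) * d := by
    rw [← hWE]; ring
  have hdefect : d * (m - d) ≤ #(W \ E) * d := by
    rw [mul_comm]; exact Nat.mul_le_mul_right d (by omega)
  rw [← sum_add_sum_compl W, ← sum_sdiff hEW, hWc] at *
  nlinarith

end ExtremalGraphDegrees

section Maximal

variable {V : Type*} [Fintype V] [DecidableEq V] {G : SimpleGraph V} [DecidableRel G.Adj] {l : ℕ}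

lemma exists_starPacking_forall_card_neighborFinset_sdiff_lt (U : Finset V) :
    ∃ P, IsStarPacking G l P ∧ Disjoint U (packingVerts P) ∧
      ∀ v ∉ U ∪ packingVerts P, #(G.neighborFinset v \ (U ∪ packingVerts P)) < l := by
  obtain ⟨P, ⟨hP, hUP⟩, hmax⟩ := Set.exists_max_image
    {P | IsStarPacking G l P ∧ Disjoint U (packingVerts P)} card (Set.toFinite _)
    ⟨∅, IsStarPacking.empty, by simp [packingVerts]⟩
  refine ⟨P, hP, hUP, fun v hv => ?_⟩
  by_contra! hl
  obtain ⟨T, hTN, hT⟩ := exists_subset_card_eq hl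
  rw [mem_union, not_or] at hv
  have hTU : Disjoint T (U ∪ packingVerts P) := disjoint_of_subset_left hTN sdiff_disjoint
  have hdisj : Disjoint (starVerts (v, T)) (packingVerts P) :=
    disjoint_insert_left.2 ⟨hv.2, hTU.mono_right subset_union_right⟩
  have hP' := hP.insert hT (fun w hw => (mem_neighborFinset _ _ _).1 (mem_sdiff.1 (hTN hw)).1)
    hdisj
  have := hmax _ ⟨hP', by
    rw [packingVerts_insert, disjoint_union_right]
    exact ⟨disjoint_insert_right.2 ⟨hv.1, (hTU.mono_right subset_union_left).symm⟩, hUP⟩⟩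
  rw [card_insert_of_disjoint_packingVerts hdisj] at this
  omega

end Maximal

lemma two_mul_ncard_edgeSet {V : Type*} [Fintype V] (G : SimpleGraph V) [DecidableRel G.Adj] :
    2 * G.edgeSet.ncard = ∑ v, G.degree v := by
  rw [sum_degrees_eq_twice_card_edges, ← coe_edgeFinset, Set.ncard_coe_finset]

lemma ncard_edgeSet_le_exNum {n : ℕ} {P : SimpleGraph (Fin n) → Prop} {G : SimpleGraph (Fin n)}
    (hG : P G) : G.edgeSet.ncard ≤ exNum n P :=
  le_csSup ⟨Nat.card (Sym2 (Fin n)), by rintro _ ⟨H, -, rfl⟩; exact Set.ncard_le_card _⟩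
    ⟨G, hG, rfl⟩

lemma exists_free_le_two_mul_ncard_edgeSet {n k l s : ℕ} (hk : 3 ≤ k) (hl : 2 ≤ l)
    (hs : s ≤ n) : ∃ H : SimpleGraph (Fin n),
      _root_.Free H (completeGraph (Fin (k + 1))) ∧ _root_.Free H (starForest (s + 1) l) ∧
      2 * s * (n - s) + (l - 1) * (n - s - (l - 1)) ≤ 2 * H.edgeSet.ncard := by
  refine ⟨extremalGraph n (n - s) (l - 1), free_completeGraph_extremalGraph hk, ?_, ?_⟩
  · have := free_starForest_extremalGraph (n := n) (m := n - s) (d := l - 1) (by omega)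
      (Nat.sub_le n s)
    rwa [Nat.sub_sub_self hs, Nat.sub_add_cancel (by omega)] at this
  · rw [two_mul_ncard_edgeSet]
    have := two_mul_sub_mul_add_le_sum_degree_extremalGraph (n := n) (m := n - s) (d := l - 1)
      (by omega) (Nat.sub_le n s)
    rwa [Nat.sub_sub_self hs] at this

lemma upper_bound_lt_lower_bound {n k l s t j r : ℕ} (hk : 3 ≤ k) (hl : 2 ≤ l)
    (hn : k * s ^ 2 + (s + 1) * (l + 1) ^ 2 ≤ n) (ht : t < s) (hj : t + j ≤ s)
    (hr : t + j * (l + 1) + r = n) :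
    t * n + 2 * (j * (l + 1) * ((s + 1) * (l + 1))) + r * (t + l)
      < 2 * s * (n - s) + (l - 1) * (n - s - (l - 1)) + n + j * (l + 1) := by
  have hsl : l - 1 ≤ n - s := by
    have : s + l ≤ (s + 1) * (l + 1) ^ 2 :=
      calc s + l ≤ (s + 1) * (l + 1) := by nlinarith
        _ ≤ (s + 1) * (l + 1) ^ 2 := Nat.mul_le_mul_left _ (Nat.le_self_pow two_ne_zero _)
    omega
  zify [hsl, (by omega : s ≤ n), (by omega : 1 ≤ l)] at *
  nlinarith [mul_nonneg (sub_nonneg.2 ht.le) (sub_nonneg.2 hn),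
    mul_nonneg (mul_nonneg (sub_nonneg.2 ht.le) (sub_nonneg.2 hk)) (sq_nonneg (s : ℤ)),
    mul_nonneg (mul_nonneg (sub_nonneg.2 hj) (by linarith : (0 : ℤ) ≤ l + 1))
      (by nlinarith : (0 : ℤ) ≤ 2 * (s + 1) * (l + 1) - t - l - 1),
    mul_nonneg (sub_nonneg.2 (by linarith : (t : ℤ) + 1 ≤ s))
      (by nlinarith : (0 : ℤ) ≤ (l + 1) * l),
    mul_nonneg (Int.natCast_nonneg t) (by linarith : (0 : ℤ) ≤ l - 1),
    mul_nonneg (Int.natCast_nonneg t) (Int.natCast_nonneg t), sq_nonneg (s : ℤ)]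

theorem stmt12_general (n k l s : ℕ) (hk : 3 ≤ k) (hl : 2 ≤ l)
    (hn : k * s ^ 2 + (s + 1) * (l + 1) ^ 2 ≤ n)
    (G : SimpleGraph (Fin n))
    (hSfree : _root_.Free G (starForest (s + 1) l))
    (hmax : G.edgeSet.ncard =
      exNum n (fun G' => _root_.Free G' (completeGraph (Fin (k + 1))) ∧
        _root_.Free G' (starForest (s + 1) l))) :
    ∃ U : Finset (Fin n), U.card = s ∧
      _root_.Free (SimpleGraph.induce (↑(Uᶜ) : Set (Fin n)) G)
        (completeBipartiteGraph Unit (Fin l)) := by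
  classical
  set U : Finset (Fin n) := {v | (s + 1) * (l + 1) ≤ G.degree v}
  obtain ⟨P, hP, hUP, hsparse⟩ :=
    exists_starPacking_forall_card_neighborFinset_sdiff_lt (G := G) (l := l) U
  have hPU := card_add_card_le_of_free hSfree hP hUP fun v hv => (mem_filter.1 hv).2
  have hUs : #U = s := by
    by_contra hUs
    have hsn : s ≤ n := by nlinarith
    obtain ⟨H, hHK, hHS, hHe⟩ := exists_free_le_two_mul_ncard_edgeSet hk hl hsn
    have hHG : H.edgeSet.ncard ≤ G.edgeSet.ncard := hmax ▸ ncard_edgeSet_le_exNum ⟨hHK, hHS⟩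
    have hup := sum_degree_add_le hUP (D := (s + 1) * (l + 1)) (fun v hv => not_le.1 fun h =>
      disjoint_left.1 hUP (mem_filter.2 ⟨mem_univ v, h⟩) hv) hsparse
    have hR : #U + #P * (l + 1) + #(U ∪ packingVerts P)ᶜ = n := by
      rw [card_compl, ← hP.card_packingVerts, ← card_union_of_disjoint hUP, Fintype.card_fin,
        Nat.add_sub_cancel' (card_le_univ _ |>.trans_eq (Fintype.card_fin n))]
    have := upper_bound_lt_lower_bound hk hl hn (by omega) (by omega : #U + #P ≤ s) hR
    rw [← two_mul_ncard_edgeSet, hP.card_packingVerts, Fintype.card_fin] at hup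
    omega
  have hP : packingVerts P = ∅ := by
    rw [packingVerts, card_eq_zero.1 (by omega : #P = 0), biUnion_empty]
  refine ⟨U, hUs, free_induce_compl_of_forall_card_neighborFinset_sdiff_lt ?_⟩
  simpa [hP] using hsparse

theorem stmt12 (n k l s : ℕ) (hk : 3 ≤ k) (hl : 2 ≤ l) (hs : 1 ≤ s)
    (hn : k * s ^ 2 + (s + 1) * (l + 1) ^ 2 ≤ n)
    (G : SimpleGraph (Fin n))
    (hKfree : _root_.Free G (completeGraph (Fin (k + 1))))
    (hSfree : _root_.Free G (starForest (s + 1) l))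
    (hmax : G.edgeSet.ncard =
      exNum n (fun G' => _root_.Free G' (completeGraph (Fin (k + 1))) ∧
        _root_.Free G' (starForest (s + 1) l))) :
    ∃ U : Finset (Fin n), U.card = s ∧
      _root_.Free (SimpleGraph.induce (↑(Uᶜ) : Set (Fin n)) G)
        (completeBipartiteGraph Unit (Fin l)) :=
  stmt12_general n k l s hk hl hn G hSfree hmax
end
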